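/- arXiv:1710.10644 — 5 statements merged into one kernel-verified Lean document; each statement's English description precedes it below -/
import Mathlib

section
/- Let n ≥ 1, let A be a real symmetric positive semidefinite n×n matrix, let δ, ε > 0, and let B be the matrix with entries B_{ij} = A_{ij}·1_{|A_{ij}| > δ} + ε·1_{i=j}. Then for every vector v ∈ ℝⁿ, vᵀ B v ≥ (ε − nδ)·‖v‖₂². In particular, every eigenvalue of B is at least ε − nδ, and B is positive definite whenever ε > nδ. -/
/-!
Write `B = truncate δ A + ε • 1`. The residual `A - truncate δ A` has entries of size at most `δ`,
so its quadratic form is bounded by `δ (∑ |vᵢ|)² ≤ n δ ‖v‖²` (Cauchy–Schwarz); as `vᵀ A v ≥ 0`,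
this gives `vᵀ (truncate δ A) v ≥ -n δ ‖v‖²`. The eigenvalue and definiteness claims follow from
this Rayleigh-quotient bound.
-/

open Matrix Finset

namespace Matrix

variable {ι : Type*}

noncomputable def truncate (δ : ℝ) (A : Matrix ι ι ℝ) : Matrix ι ι ℝ :=
  A.map fun a => if δ < |a| then a else 0

theorem abs_sub_truncate_apply_le {δ : ℝ} (hδ : 0 ≤ δ) (A : Matrix ι ι ℝ) (i j : ι) :
    |(A - truncate δ A) i j| ≤ δ := by
  simp only [truncate, sub_apply, map_apply]
  split_ifs with h
  · simpa using hδ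
  · simpa using not_lt.mp h

theorem IsHermitian.truncate {A : Matrix ι ι ℝ} (hA : A.IsHermitian) (δ : ℝ) :
    (truncate δ A).IsHermitian :=
  hA.map _ fun _ => rfl

variable [Fintype ι]

theorem abs_dotProduct_mulVec_le_of_abs_apply_le {E : Matrix ι ι ℝ} {δ : ℝ} (hδ : 0 ≤ δ)
    (hE : ∀ i j, |E i j| ≤ δ) (v : ι → ℝ) :
    |v ⬝ᵥ E *ᵥ v| ≤ Fintype.card ι * δ * (v ⬝ᵥ v) := by
  calc |v ⬝ᵥ E *ᵥ v| = |∑ i, ∑ j, v i * (E i j * v j)| := by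
        simp only [dotProduct, mulVec, mul_sum]
    _ ≤ ∑ i, ∑ j, |v i| * (δ * |v j|) := by
        refine (abs_sum_le_sum_abs _ _).trans (sum_le_sum fun i _ => ?_)
        refine (abs_sum_le_sum_abs _ _).trans (sum_le_sum fun j _ => ?_)
        rw [abs_mul, abs_mul]
        gcongr
        exact hE i j
    _ = δ * (∑ i, |v i|) ^ 2 := by
        simp only [← mul_sum, ← sum_mul, sq]; ring
    _ ≤ δ * (Fintype.card ι * ∑ i, |v i| ^ 2) := by
        gcongr
        exact sq_sum_le_card_mul_sum_sq
    _ = Fintype.card ι * δ * (v ⬝ᵥ v) := by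
        simp only [dotProduct, sq_abs, ← sq]; ring

theorem PosSemidef.neg_mul_le_dotProduct_truncate_mulVec {A : Matrix ι ι ℝ} (hA : A.PosSemidef)
    {δ : ℝ} (hδ : 0 ≤ δ) (v : ι → ℝ) :
    -(Fintype.card ι * δ * (v ⬝ᵥ v)) ≤ v ⬝ᵥ truncate δ A *ᵥ v := by
  have hA_nonneg : 0 ≤ v ⬝ᵥ A *ᵥ v := hA.dotProduct_mulVec_nonneg v
  have hres := abs_dotProduct_mulVec_le_of_abs_apply_le hδ (abs_sub_truncate_apply_le hδ A) v
  rw [sub_mulVec, dotProduct_sub] at hres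
  linarith [le_abs_self (v ⬝ᵥ A *ᵥ v - v ⬝ᵥ truncate δ A *ᵥ v)]

theorem le_of_mulVec_eq_smul {B : Matrix ι ι ℝ} {m μ : ℝ} {v : ι → ℝ}
    (hB : ∀ w, m * (w ⬝ᵥ w) ≤ w ⬝ᵥ B *ᵥ w) (hv : v ≠ 0) (hμ : B *ᵥ v = μ • v) : m ≤ μ := by
  have hpos : 0 < v ⬝ᵥ v := by simpa using dotProduct_self_star_pos_iff.mpr hv
  have := hB v
  rw [hμ, dotProduct_smul, smul_eq_mul] at this
  exact le_of_mul_le_mul_right this hpos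

theorem posDef_of_forall_mul_dotProduct_self_le {B : Matrix ι ι ℝ} (hB : B.IsHermitian) {m : ℝ}
    (hm : 0 < m) (h : ∀ w, m * (w ⬝ᵥ w) ≤ w ⬝ᵥ B *ᵥ w) : B.PosDef := by
  refine posDef_iff_dotProduct_mulVec.mpr ⟨hB, fun v hv => ?_⟩
  have hpos : 0 < v ⬝ᵥ v := by simpa using dotProduct_self_star_pos_iff.mpr hv
  simpa using (mul_pos hm hpos).trans_le (h v)

end Matrix

theorem shifted_truncation_posdef_general
    (n : ℕ)
    (A : Matrix (Fin n) (Fin n) ℝ) (hA : A.PosSemidef)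
    (δ ε : ℝ) (hδ : 0 < δ)
    (B : Matrix (Fin n) (Fin n) ℝ)
    (hB : ∀ i j, B i j = (if δ < |A i j| then A i j else 0) + (if i = j then ε else 0)) :
    (∀ v : Fin n → ℝ, (ε - n * δ) * (∑ i, v i ^ 2) ≤ v ⬝ᵥ B.mulVec v) ∧
    (∀ (μ : ℝ) (v : Fin n → ℝ), v ≠ 0 → B.mulVec v = μ • v → ε - n * δ ≤ μ) ∧
    ((n : ℝ) * δ < ε → B.PosDef) := by
  have hB_eq : B = truncate δ A + ε • 1 := by
    ext i j
    simp [hB, truncate, one_apply]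
  have hquad : ∀ v, (ε - n * δ) * (v ⬝ᵥ v) ≤ v ⬝ᵥ B *ᵥ v := by
    intro v
    have := hA.neg_mul_le_dotProduct_truncate_mulVec hδ.le v
    rw [Fintype.card_fin] at this
    rw [hB_eq, add_mulVec, dotProduct_add, smul_mulVec, one_mulVec, dotProduct_smul, smul_eq_mul]
    linarith
  refine ⟨fun v => ?_, fun μ v hv hμ => le_of_mulVec_eq_smul hquad hv hμ, fun hε => ?_⟩
  · simpa [dotProduct, sq] using hquad v
  · refine posDef_of_forall_mul_dotProduct_self_le ?_ (by linarith) hquad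
    rw [hB_eq]
    exact hA.isHermitian.truncate δ |>.add (isHermitian_one.smul (.all ε))

theorem shifted_truncation_posdef
    (n : ℕ) (hn : 1 ≤ n)
    (A : Matrix (Fin n) (Fin n) ℝ) (hA : A.PosSemidef)
    (δ ε : ℝ) (hδ : 0 < δ) (hε : 0 < ε)
    (B : Matrix (Fin n) (Fin n) ℝ)
    (hB : ∀ i j, B i j = (if δ < |A i j| then A i j else 0) + (if i = j then ε else 0)) :
    (∀ v : Fin n → ℝ, (ε - n * δ) * (∑ i, v i ^ 2) ≤ v ⬝ᵥ B.mulVec v) ∧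
    (∀ (μ : ℝ) (v : Fin n → ℝ), v ≠ 0 → B.mulVec v = μ • v → ε - n * δ ≤ μ) ∧
    ((n : ℝ) * δ < ε → B.PosDef) :=
  shifted_truncation_posdef_general n A hA δ ε hδ B hB
end

section
/- Let ε > 0, let X be a standard Gaussian random variable (centered, variance 1) and let E be an independent centered Gaussian random variable of variance ε. Then P[X·(X+E) ≤ 0] ≤ 2·ε^{1/3}. -/
/-!
If `X` and `X + E` have opposite signs then `|X| ≤ |E|`, so for any `δ > 0` the event lies in
`{|X| ≤ δ} ∪ {δ ≤ |E|}`. The standard Gaussian density is at most `1 / √(2π) ≤ 1 / 2`, which bounds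
the first probability by `δ`, and Chebyshev bounds the second by `ε / δ²`. With `δ = ε ^ (1/3)`
both are `δ`.
-/

open MeasureTheory ProbabilityTheory Real NNReal

lemma abs_le_abs_of_mul_add_nonpos {x e : ℝ} (h : x * (x + e) ≤ 0) : |x| ≤ |e| :=
  sq_le_sq.mp (by nlinarith [sq_nonneg (x + e)])

lemma two_le_sqrt_two_mul_pi : 2 ≤ √(2 * π) :=
  le_sqrt_of_sq_le (by nlinarith [pi_gt_three])

lemma MeasureTheory.measure_mul_add_nonpos_le {Ω : Type*} [MeasurableSpace Ω] (μ : Measure Ω)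
    (X E : Ω → ℝ) (δ : ℝ) :
    μ {ω | X ω * (X ω + E ω) ≤ 0} ≤ μ {ω | |X ω| ≤ δ} + μ {ω | δ ≤ |E ω|} := by
  refine (measure_mono fun ω hω ↦ ?_).trans (measure_union_le _ _)
  rcases le_total |X ω| δ with h | h
  · exact Or.inl h
  · exact Or.inr (h.trans (abs_le_abs_of_mul_add_nonpos hω))

namespace ProbabilityTheory

variable {m : ℝ} {v : ℝ≥0}

lemma gaussianPDF_le_ofReal_inv_sqrt (x : ℝ) :
    gaussianPDF m v x ≤ ENNReal.ofReal (√(2 * π * v))⁻¹ := by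
  rw [gaussianPDF, gaussianPDFReal]
  refine ENNReal.ofReal_le_ofReal (mul_le_of_le_one_right (by positivity) ?_)
  rw [exp_le_one_iff, neg_div]
  exact neg_nonpos.mpr (by positivity)

lemma gaussianReal_le_ofReal_mul_volume (hv : v ≠ 0) (s : Set ℝ) :
    gaussianReal m v s ≤ ENNReal.ofReal (√(2 * π * v))⁻¹ * volume s := by
  rw [gaussianReal_apply m hv, ← setLIntegral_const]
  exact lintegral_mono fun x ↦ gaussianPDF_le_ofReal_inv_sqrt x

lemma gaussianReal_zero_one_abs_le_le {a : ℝ} (ha : 0 ≤ a) :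
    gaussianReal 0 1 {x | |x| ≤ a} ≤ ENNReal.ofReal a := by
  have hset : {x : ℝ | |x| ≤ a} = Set.Icc (-a) a := by ext; simp [abs_le]
  have hdensity : (√(2 * π))⁻¹ * (2 * a) ≤ a := by
    rw [inv_mul_le_iff₀ (by positivity)]
    nlinarith [two_le_sqrt_two_mul_pi]
  calc gaussianReal 0 1 {x | |x| ≤ a}
      ≤ ENNReal.ofReal (√(2 * π * (1 : ℝ≥0)))⁻¹ * volume (Set.Icc (-a) a) :=
        hset ▸ gaussianReal_le_ofReal_mul_volume one_ne_zero _
    _ = ENNReal.ofReal ((√(2 * π))⁻¹ * (2 * a)) := by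
        rw [Real.volume_Icc, ← ENNReal.ofReal_mul (by positivity), sub_neg_eq_add, ← two_mul,
          NNReal.coe_one, mul_one]
    _ ≤ ENNReal.ofReal a := ENNReal.ofReal_le_ofReal hdensity

lemma gaussianReal_le_abs_sub_le {c : ℝ} (hc : 0 < c) :
    gaussianReal m v {x | c ≤ |x - m|} ≤ ENNReal.ofReal (v / c ^ 2) := by
  simpa [integral_id_gaussianReal, variance_id_gaussianReal] using
    meas_ge_le_variance_div_sq (memLp_id_gaussianReal (μ := m) (v := v) 2) hc

end ProbabilityTheory

theorem gaussian_perturbation_sign_change_general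
    {Ω : Type*} [MeasurableSpace Ω] (μ : Measure Ω) [IsProbabilityMeasure μ]
    (ε : ℝ) (hε : 0 < ε)
    (X E : Ω → ℝ) (hX : Measurable X) (hE : Measurable E)
    (hXlaw : μ.map X = gaussianReal 0 1)
    (hElaw : μ.map E = gaussianReal 0 ε.toNNReal) :
    (μ {ω | X ω * (X ω + E ω) ≤ 0}).toReal ≤ 2 * ε ^ ((1 : ℝ) / 3) := by
  have hδ_cube : (ε ^ ((1 : ℝ) / 3)) ^ 3 = ε := by
    simpa using rpow_inv_natCast_pow hε.le three_ne_zero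
  set δ := ε ^ ((1 : ℝ) / 3)
  have hδ : 0 < δ := rpow_pos_of_pos hε _
  have hX_small : μ (X ⁻¹' {x | |x| ≤ δ}) ≤ ENNReal.ofReal δ := by
    rw [← Measure.map_apply hX (measurableSet_le (by fun_prop) measurable_const), hXlaw]
    exact gaussianReal_zero_one_abs_le_le hδ.le
  have hE_large : μ (E ⁻¹' {x | δ ≤ |x|}) ≤ ENNReal.ofReal δ := by
    rw [← Measure.map_apply hE (measurableSet_le measurable_const (by fun_prop)), hElaw]
    convert gaussianReal_le_abs_sub_le (m := 0) hδ using 2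
    · simp
    · rw [Real.coe_toNNReal _ hε.le, ← hδ_cube]
      field_simp
  refine ENNReal.toReal_le_of_le_ofReal (by positivity) ?_
  calc μ {ω | X ω * (X ω + E ω) ≤ 0}
      ≤ μ {ω | |X ω| ≤ δ} + μ {ω | δ ≤ |E ω|} := measure_mul_add_nonpos_le μ X E δ
    _ ≤ ENNReal.ofReal δ + ENNReal.ofReal δ := add_le_add hX_small hE_large
    _ = ENNReal.ofReal (2 * δ) := by rw [← ENNReal.ofReal_add hδ.le hδ.le, two_mul]

theorem gaussian_perturbation_sign_change
    {Ω : Type*} [MeasurableSpace Ω] (μ : Measure Ω) [IsProbabilityMeasure μ]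
    (ε : ℝ) (hε : 0 < ε)
    (X E : Ω → ℝ) (hX : Measurable X) (hE : Measurable E)
    (hXlaw : μ.map X = gaussianReal 0 1)
    (hElaw : μ.map E = gaussianReal 0 ε.toNNReal)
    (hindep : IndepFun X E μ) :
    (μ {ω | X ω * (X ω + E ω) ≤ 0}).toReal ≤ 2 * ε ^ ((1 : ℝ) / 3) :=
  gaussian_perturbation_sign_change_general μ ε hε X E hX hE hXlaw hElaw
end

section
/- Let n ≥ 1 and δ, ε > 0 with ε ≥ 2n²δ. Let B and C be real symmetric positive definite n×n matrices such that every entry of B − C has absolute value at most δ and every entry of C⁻¹ has absolute value at most 1/ε. Then det(C⁻¹B) > 0 and |log det(C⁻¹B)| ≤ 2n³·δ/ε. -/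
/-!
Since `C = yᴴ y` with `y` invertible, `C⁻¹ B` is conjugate to the Hermitian matrix
`(y⁻¹)ᴴ B y⁻¹`, so its determinant is the product of real eigenvalues `λ`. These are eigenvalues
of `C⁻¹ B = 1 + C⁻¹ (B - C)`, whose perturbation has entries at most `n δ / ε`, so Gershgorin's
theorem gives `|λ - 1| ≤ n² δ / ε ≤ 1/2`; there `|log λ| ≤ 2 |λ - 1|`, and summing over the `n`
eigenvalues bounds `|log det (C⁻¹ B)|`.
-/

open Matrix

theorem Matrix.abs_mul_apply_le {l m o : Type*} [Fintype m] {A : Matrix l m ℝ} {B : Matrix m o ℝ}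
    {a b : ℝ} (hA : ∀ i k, |A i k| ≤ a) (hB : ∀ k j, |B k j| ≤ b) (i : l) (j : o) :
    |(A * B) i j| ≤ Fintype.card m * (a * b) := by
  calc |(A * B) i j| ≤ ∑ k, |A i k * B k j| := by
        rw [mul_apply]; exact Finset.abs_sum_le_sum_abs _ _
    _ = ∑ k, |A i k| * |B k j| := by simp only [abs_mul]
    _ ≤ ∑ _k : m, a * b := Finset.sum_le_sum fun k _ =>
        mul_le_mul (hA i k) (hB k j) (abs_nonneg _) ((abs_nonneg _).trans (hA i k))
    _ = Fintype.card m * (a * b) := by simp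

theorem Matrix.norm_le_card_mul_of_mem_spectrum {K n : Type*} [NormedField K] [Fintype n]
    [DecidableEq n] {A : Matrix n n K} {a : ℝ} (hA : ∀ i j, ‖A i j‖ ≤ a) {μ : K}
    (hμ : μ ∈ spectrum K A) :
    ‖μ‖ ≤ Fintype.card n * a := by
  rw [← spectrum_toLin', ← Module.End.hasEigenvalue_iff_mem_spectrum] at hμ
  obtain ⟨k, hk⟩ := eigenvalue_mem_ball hμ
  rw [mem_closedBall_iff_norm] at hk
  calc ‖μ‖ ≤ ‖A k k‖ + ‖μ - A k k‖ := norm_le_norm_add_norm_sub' μ (A k k)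
    _ ≤ ∑ j, ‖A k j‖ := by
        rw [← Finset.add_sum_erase _ _ (Finset.mem_univ k)]
        exact add_le_add_right hk _
    _ ≤ ∑ _j : n, a := Finset.sum_le_sum fun j _ => hA k j
    _ = Fintype.card n * a := by simp

theorem spectrum.sub_one_mem_sub_one {R A : Type*} [CommRing R] [Ring A] [Algebra R A] {a : A}
    {μ : R} (hμ : μ ∈ spectrum R a) : μ - 1 ∈ spectrum R (a - 1) := by
  rw [← map_one (algebraMap R A), ← spectrum.sub_singleton_eq]
  exact Set.sub_mem_sub hμ rfl

open scoped ComplexOrder MatrixOrder in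
theorem Matrix.PosDef.exists_units_conj_inv_mul_isHermitian {𝕜 n : Type*} [RCLike 𝕜] [Fintype n]
    [DecidableEq n] {B C : Matrix n n 𝕜} (hC : C.PosDef) (hB : B.IsHermitian) :
    ∃ u : (Matrix n n 𝕜)ˣ, (u * (C⁻¹ * B) * u⁻¹ : Matrix n n 𝕜).IsHermitian := by
  obtain ⟨_, ⟨u, rfl⟩, rfl⟩ := CStarAlgebra.isStrictlyPositive_iff_eq_star_mul_self.mp
    hC.isStrictlyPositive
  refine ⟨u, ?_⟩
  have hCinv :
      (star (u : Matrix n n 𝕜) * u)⁻¹ = (↑u⁻¹ : Matrix n n 𝕜) * (↑u⁻¹ : Matrix n n 𝕜)ᴴ := by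
    rw [Matrix.mul_inv_rev, coe_units_inv, conjTranspose_nonsing_inv, star_eq_conjTranspose]
  rw [hCinv, Matrix.mul_assoc, Matrix.mul_assoc, Matrix.mul_assoc, Units.mul_inv_cancel_left,
    ← Matrix.mul_assoc]
  exact isHermitian_conjTranspose_mul_mul _ hB

theorem Real.abs_log_le_two_mul_abs_sub_one {x : ℝ} (hx : 1 / 2 ≤ x) :
    |Real.log x| ≤ 2 * |x - 1| := by
  have hx₀ : 0 < x := by linarith
  rw [abs_le]
  constructor
  · have hinv : 1 - x⁻¹ = (x - 1) / x := by field_simp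
    have key : -(2 * |x - 1|) ≤ (x - 1) / x := by
      rw [le_div_iff₀ hx₀]
      cases abs_cases (x - 1) <;> nlinarith
    linarith [Real.one_sub_inv_le_log_of_pos hx₀]
  · linarith [Real.log_le_sub_one_of_pos hx₀, le_abs_self (x - 1), abs_nonneg (x - 1)]

theorem Real.abs_log_prod_le {ι : Type*} (s : Finset ι) {x : ι → ℝ} {r : ℝ} (hr : r ≤ 1 / 2)
    (hx : ∀ i ∈ s, |x i - 1| ≤ r) :
    |Real.log (∏ i ∈ s, x i)| ≤ s.card * (2 * r) := by
  have hx_half : ∀ i ∈ s, 1 / 2 ≤ x i := fun i hi => by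
    linarith [(abs_le.mp ((hx i hi).trans hr)).1]
  calc |Real.log (∏ i ∈ s, x i)| = |∑ i ∈ s, Real.log (x i)| := by
        rw [Real.log_prod fun i hi => by linarith [hx_half i hi]]
    _ ≤ ∑ i ∈ s, 2 * |x i - 1| := (Finset.abs_sum_le_sum_abs _ _).trans
        (Finset.sum_le_sum fun i hi => Real.abs_log_le_two_mul_abs_sub_one (hx_half i hi))
    _ ≤ ∑ _i ∈ s, 2 * r := Finset.sum_le_sum fun i hi => by linarith [hx i hi]
    _ = s.card * (2 * r) := by rw [Finset.sum_const, nsmul_eq_mul]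

theorem log_det_perturbation_bound_general
    (n : ℕ)
    (δ ε : ℝ) (hε : 0 < ε) (hεδ : 2 * (n : ℝ) ^ 2 * δ ≤ ε)
    (B C : Matrix (Fin n) (Fin n) ℝ)
    (hB : B.PosDef) (hC : C.PosDef)
    (hBC : ∀ i j, |(B - C) i j| ≤ δ)
    (hCinv : ∀ i j, |C⁻¹ i j| ≤ 1 / ε) :
    0 < (C⁻¹ * B).det ∧ |Real.log (C⁻¹ * B).det| ≤ 2 * (n : ℝ) ^ 3 * δ / ε := by
  obtain ⟨u, hM⟩ := hC.exists_units_conj_inv_mul_isHermitian hB.1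
  set ν := hM.eigenvalues
  have hdet : (C⁻¹ * B).det = ∏ j, ν j := by
    rw [← det_units_conj u, hM.det_eq_prod_eigenvalues]
    rfl
  have hF : ∀ i j, ‖(C⁻¹ * B - 1) i j‖ ≤ Fintype.card (Fin n) * (1 / ε * δ) := by
    rw [← nonsing_inv_mul C hC.det_pos.ne'.isUnit, ← Matrix.mul_sub]
    exact abs_mul_apply_le hCinv hBC
  have hν : ∀ j, |ν j - 1| ≤ n ^ 2 * δ / ε := fun j => by
    have hmem : ν j ∈ spectrum ℝ (C⁻¹ * B) :=
      spectrum.units_conjugate (R := ℝ) (u := u) ▸ hM.eigenvalues_mem_spectrum_real j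
    calc |ν j - 1| ≤ Fintype.card (Fin n) * (Fintype.card (Fin n) * (1 / ε * δ)) :=
          norm_le_card_mul_of_mem_spectrum hF (spectrum.sub_one_mem_sub_one hmem)
      _ = n ^ 2 * δ / ε := by rw [Fintype.card_fin]; ring
  have hs : (n : ℝ) ^ 2 * δ / ε ≤ 1 / 2 := by
    rw [div_le_iff₀ hε]; linarith
  refine ⟨hdet ▸ Finset.prod_pos fun j _ => ?_, ?_⟩
  · linarith [(abs_le.mp ((hν j).trans hs)).1]
  calc |Real.log (C⁻¹ * B).det| ≤ (Finset.univ : Finset (Fin n)).card * (2 * (n ^ 2 * δ / ε)) :=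
        hdet ▸ Real.abs_log_prod_le _ hs fun j _ => hν j
    _ = 2 * (n : ℝ) ^ 3 * δ / ε := by rw [Finset.card_univ, Fintype.card_fin]; ring

theorem log_det_perturbation_bound
    (n : ℕ) (hn : 1 ≤ n)
    (δ ε : ℝ) (hδ : 0 < δ) (hε : 0 < ε) (hεδ : 2 * (n : ℝ) ^ 2 * δ ≤ ε)
    (B C : Matrix (Fin n) (Fin n) ℝ)
    (hB : B.PosDef) (hC : C.PosDef)
    (hBC : ∀ i j, |(B - C) i j| ≤ δ)
    (hCinv : ∀ i j, |C⁻¹ i j| ≤ 1 / ε) :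
    0 < (C⁻¹ * B).det ∧ |Real.log (C⁻¹ * B).det| ≤ 2 * (n : ℝ) ^ 3 * δ / ε :=
  log_det_perturbation_bound_general n δ ε hε hεδ B C hB hC hBC hCinv
end

section
/- Let (v_k)_{k≥0} and (b_k)_{k≥0} be sequences of real numbers such that: v_k ≥ 0 for all k, 0 < v_0 < 1, (b_k) is nonnegative and nondecreasing, and v_{k+1} ≥ v_k² − b_k for all k ≥ 0. Then for all k ≥ 1, v_k ≥ v_0^{2^k} − 4^k·√(b_{k−1}). -/
set_option maxHeartbeats 1000000


theorem quadratic_recursion_lower_bound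
    (v b : ℕ → ℝ)
    (hvnn : ∀ k, 0 ≤ v k) (hv0 : 0 < v 0) (hv1 : v 0 < 1)
    (hbnn : ∀ k, 0 ≤ b k) (hbmono : Monotone b)
    (hrec : ∀ k, v k ^ 2 - b k ≤ v (k + 1)) :
    ∀ k, 1 ≤ k → v 0 ^ (2 ^ k) - 4 ^ k * Real.sqrt (b (k - 1)) ≤ v k := by
  have hsq : ∀ k, 0 ≤ Real.sqrt (b k) := fun k => Real.sqrt_nonneg _
  have hbs : ∀ k, b k = Real.sqrt (b k) ^ 2 := fun k => (Real.sq_sqrt (hbnn k)).symm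
  intro k hk
  induction k, hk using Nat.le_induction with
  | base =>
    norm_num
    by_cases h : Real.sqrt (b 0) ≤ 4
    · have hb0 : b 0 ≤ 4 * Real.sqrt (b 0) := by nlinarith [hbs 0, hsq 0]
      have := hrec 0
      nlinarith
    · push_neg at h
      have h1 : (1:ℝ) < 4 * Real.sqrt (b 0) := by nlinarith
      have hvp : v 0 ^ 2 ≤ 1 := by nlinarith
      nlinarith [hvnn 1]
  | succ k hk ih =>
    simp only [Nat.add_sub_cancel]
    set a := v 0 ^ (2 ^ k) with ha
    set s := Real.sqrt (b k) with hs
    set s' := Real.sqrt (b (k - 1)) with hs'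
    have hss : s' ≤ s := Real.sqrt_le_sqrt (hbmono (Nat.sub_le k 1))
    have hs0 : 0 ≤ s := hsq k
    have hs'0 : 0 ≤ s' := hsq _
    have ha0 : 0 ≤ a := pow_nonneg hv0.le _
    have ha1 : a ≤ 1 := pow_le_one₀ hv0.le hv1.le
    have hbk : b k = s ^ 2 := hbs k
    set p : ℝ := 4 ^ k with hp
    have hp1 : (1:ℝ) ≤ p := one_le_pow₀ (by norm_num)
    have hpow : v 0 ^ (2 ^ (k + 1)) = a ^ 2 := by
      rw [ha, ← pow_mul, pow_succ]
    have h4 : (4:ℝ) ^ (k + 1) = 4 * p := by rw [hp, pow_succ]; ring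
    rw [hpow, h4]
    have hrk := hrec k
    have hvk0 := hvnn k
    have hvk10 := hvnn (k + 1)
    have hvk : a - p * s' ≤ v k := ih
    clear_value a s s' p
    clear ih hbs hsq hrec hbmono hbnn hvnn hpow h4 ha hs hs' hp
    by_cases hbig : 1 ≤ 4 * p * s
    · -- RHS of goal is ≤ 0
      nlinarith [sq_nonneg a]
    · push_neg at hbig
      by_cases hpos : 0 ≤ a - p * s'
      · have hsq2 : (a - p * s') ^ 2 ≤ v k ^ 2 := by nlinarith
        have hp0 : (0:ℝ) ≤ p := by positivity
        have hps : p * s' ≤ p * s := mul_le_mul_of_nonneg_left hss hp0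
        have hps0 : 0 ≤ p * s := mul_nonneg hp0 hs0
        have haps : a * (p * s') ≤ p * s := by nlinarith [mul_nonneg hp0 hs'0]
        have hsle1 : s ≤ 1 := by nlinarith
        have hs2 : s ^ 2 ≤ p * s := by nlinarith
        have key : a ^ 2 - 4 * p * s ≤ (a - p * s') ^ 2 - s ^ 2 := by
          nlinarith [sq_nonneg (p * s')]
        linarith [hrk, hbk.le, hbk.ge]
      · push_neg at hpos
        -- a < p * s', so a^2 ≤ (p*s)^2 ≤ 4*p*s since p*s < 1/4
        have h1 : a ^ 2 ≤ (p * s') ^ 2 := by nlinarith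
        have h2 : (p * s') ^ 2 ≤ (p * s) ^ 2 := by nlinarith [mul_le_mul_of_nonneg_left hss (by positivity : (0:ℝ) ≤ p)]
        have h3 : (p * s) ^ 2 ≤ 4 * p * s := by nlinarith [mul_nonneg (by positivity : (0:ℝ) ≤ p) hs0]
        nlinarith
end

section
/- Let C > 0, η > 0, λ ≥ 4C, and let n be a real number with n ≥ 2 and n ≥ (4/3)^{λ/η}. Define sequences (n_k)_{k≥0} and (λ_k)_{k≥0} by n_0 = n, λ_0 = λ, and for all k ≥ 0: n_{k+1} = n_k^{1+η} and λ_{k+1} = λ_k + 2C·n_k^{−3/λ_k}. Then λ_k ≤ 3λ for all k ≥ 0. -/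
theorem lambda_sequence_bounded
    (C η lam n : ℝ)
    (hC : 0 < C) (hη : 0 < η) (hlam : 4 * C ≤ lam)
    (hn2 : 2 ≤ n) (hn : (4 / 3 : ℝ) ^ (lam / η) ≤ n)
    (nseq lseq : ℕ → ℝ)
    (hn0 : nseq 0 = n) (hl0 : lseq 0 = lam)
    (hnrec : ∀ k, nseq (k + 1) = nseq k ^ (1 + η))
    (hlrec : ∀ k, lseq (k + 1) = lseq k + 2 * C * nseq k ^ (-3 / lseq k)) :
    ∀ k, lseq k ≤ 3 * lam := by
  have hn1 : (1:ℝ) ≤ n := by linarith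
  have hnpos : (0:ℝ) < n := by linarith
  have hlam0 : (0:ℝ) < lam := by linarith
  -- closed form for nseq
  have hnf : ∀ k, nseq k = n ^ (((1+η)^k : ℝ)) := by
    intro k
    induction k with
    | zero => simpa using hn0
    | succ k ih =>
      rw [hnrec, ih, pow_succ, Real.rpow_mul hnpos.le]
  have ha1 : ∀ k : ℕ, (1:ℝ) + k * η ≤ (1+η)^k := by
    intro k
    have := one_add_mul_le_pow (a := η) (by linarith) k
    linarith
  -- lam ≤ lseq k
  have hmono : ∀ k, lam ≤ lseq k := by
    intro k
    induction k with
    | zero => simp [hl0]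
    | succ k ih =>
      rw [hlrec]
      have hp : 0 < nseq k ^ (-3 / lseq k) := by
        rw [hnf]; exact Real.rpow_pos_of_pos (Real.rpow_pos_of_pos hnpos _) _
      nlinarith
  -- key inequality
  have key : ∀ k, lseq k ≤ 3 * lam → nseq k ^ (-3 / lseq k) ≤ (3/4:ℝ)^k := by
    intro k hk3
    have hL : 0 < lseq k := lt_of_lt_of_le hlam0 (hmono k)
    set a : ℝ := (1+η)^k with ha
    have hk0 : (0:ℝ) ≤ (k:ℝ) := Nat.cast_nonneg k
    have ha0 : (1:ℝ) ≤ a := le_trans (by nlinarith) (ha1 k)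
    have step2 : n ^ (a / lam) ≤ nseq k ^ (3 / lseq k) := by
      rw [hnf, ← Real.rpow_mul hnpos.le]
      apply Real.rpow_le_rpow_of_exponent_le hn1
      have h1 : 1/lam ≤ 3/lseq k := by
        rw [div_le_div_iff₀ hlam0 hL]; linarith
      calc a / lam = a * (1/lam) := by ring
        _ ≤ a * (3/lseq k) := by
            apply mul_le_mul_of_nonneg_left h1 (by linarith)
    have step3 : ((4/3:ℝ) ^ (lam/η)) ^ (a/lam) ≤ n ^ (a/lam) := by
      apply Real.rpow_le_rpow (by positivity) hn (by positivity)
    have step3' : ((4/3:ℝ) ^ (lam/η)) ^ (a/lam) = (4/3:ℝ) ^ (a/η) := by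
      rw [← Real.rpow_mul (by norm_num)]
      congr 1
      field_simp
    have step4 : (4/3:ℝ) ^ ((k:ℝ)) ≤ (4/3:ℝ) ^ (a/η) := by
      apply Real.rpow_le_rpow_of_exponent_le (by norm_num)
      rw [le_div_iff₀ hη]
      have := ha1 k
      linarith
    have hmain : (4/3:ℝ) ^ ((k:ℝ)) ≤ nseq k ^ (3 / lseq k) := by
      calc (4/3:ℝ) ^ ((k:ℝ)) ≤ (4/3:ℝ) ^ (a/η) := step4
        _ = ((4/3:ℝ) ^ (lam/η)) ^ (a/lam) := step3'.symm
        _ ≤ n ^ (a/lam) := step3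
        _ ≤ nseq k ^ (3 / lseq k) := step2
    have hnk0 : 0 < nseq k := by
      rw [hnf]; exact Real.rpow_pos_of_pos hnpos _
    have hneg : nseq k ^ (-3 / lseq k) = (nseq k ^ (3 / lseq k))⁻¹ := by
      rw [neg_div, Real.rpow_neg hnk0.le]
    rw [hneg]
    have h43 : (0:ℝ) < (4/3:ℝ) ^ ((k:ℝ)) := by positivity
    have := inv_anti₀ h43 hmain
    calc (nseq k ^ (3 / lseq k))⁻¹ ≤ ((4/3:ℝ) ^ ((k:ℝ)))⁻¹ := this
      _ = (3/4:ℝ)^k := by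
          rw [Real.rpow_natCast, ← inv_pow]
          norm_num
  -- strengthened induction
  have main : ∀ k, lseq k ≤ lam + 8*C*(1 - (3/4:ℝ)^k) := by
    intro k
    induction k with
    | zero => simp [hl0]
    | succ k ih =>
      have hpow : (0:ℝ) ≤ (3/4:ℝ)^k := by positivity
      have hpow1 : (3/4:ℝ)^k ≤ 1 := pow_le_one₀ (by norm_num) (by norm_num)
      have hk3 : lseq k ≤ 3 * lam := by nlinarith
      have hkey := key k hk3
      rw [hlrec]
      have : (3/4:ℝ)^(k+1) = (3/4:ℝ)^k * (3/4) := pow_succ _ _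
      nlinarith
  intro k
  have hpow : (0:ℝ) ≤ (3/4:ℝ)^k := by positivity
  have := main k
  nlinarith
end
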